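/- Fix real numbers t₁₁ > 0 and t₂₂ > 0, and s ∈ ℂ. For every natural number n ≥ 1 and every real x with t₁₁·t₂₂ − x² > 0, the normalized n-th derivative 2^{−n}·(d/dx)^n at x of the function x ↦ (t₁₁·t₂₂ − x²)^{−s} equals Σ_{k=0}^{⌊n/2⌋} 2^{−k} · a_{n−1,k} · (t₁₁·t₂₂ − x²)^{−(s+n−k)} · x^{n−2k} · Π_{l=0}^{n−k−1}(s+l). -/

import Mathlib

/-- The triangle numbers `a_{n,m}`: `a_{n,0} = 1`, `a_{0,m} = 0` for `m > 0`, and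
`a_{n,m} = (n - 2(m-1)) a_{n-1,m-1} + a_{n-1,m}` for `n, m > 0`. -/
def triangleNum : ℕ → ℕ → ℤ
  | _, 0 => 1
  | 0, _ + 1 => 0
  | n + 1, m + 1 => ((n : ℤ) + 1 - 2 * m) * triangleNum n m + triangleNum n (m + 1)

/-!
With `φ_{p,j}(x) = (s)_p (c - x²)^{-(s+p)} x^j`, differentiation acts by
`φ_{p,j}' = 2 φ_{p+1,j+1} + j φ_{p,j-1}`. Applied to `Σ_k 2^{-k} a_{n-1,k} φ_{n-k,n-2k}` it
gives twice the same sum with `n + 1` in place of `n`: the two contributions to the coefficient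
of `φ_{n+1-k,n+1-2k}` combine exactly as in the recursion of the triangle numbers. Since
`a_{n-1,k} = 0` for `2k > n`, the sum may run over `k ≤ n` or `k ≤ n/2` alike.
-/

open Finset Set

theorem iteratedDerivWithin_eq_of_hasDerivAt {𝕜 F : Type*} [NontriviallyNormedField 𝕜]
    [NormedAddCommGroup F] [NormedSpace 𝕜 F] {f : 𝕜 → F} {U : Set 𝕜} (hU : IsOpen U)
    (g : ℕ → 𝕜 → F) (hf : EqOn f (g 0) U) (hg : ∀ n, ∀ x ∈ U, HasDerivAt (g n) (g (n + 1) x) x)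
    (n : ℕ) : EqOn (iteratedDerivWithin n f U) (g n) U := by
  induction n with
  | zero => simpa using hf
  | succ n ih =>
    intro x hx
    rw [iteratedDerivWithin_succ, derivWithin_congr ih (ih hx), derivWithin_of_isOpen hU hx,
      (hg n x hx).deriv]

theorem triangleNum_eq_zero_of_lt {n m : ℕ} (h : n + 1 < 2 * m) : triangleNum n m = 0 := by
  induction n generalizing m with
  | zero => obtain ⟨m, rfl⟩ : ∃ m', m = m' + 1 := ⟨m - 1, by omega⟩; rfl
  | succ n ih =>
    obtain ⟨m, rfl⟩ : ∃ m', m = m' + 1 := ⟨m - 1, by omega⟩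
    change ((n : ℤ) + 1 - 2 * m) * triangleNum n m + triangleNum n (m + 1) = 0
    rw [ih (m := m + 1) (by omega), add_zero]
    rcases (show n + 1 ≤ 2 * m by omega).eq_or_lt with h | h
    · exact mul_eq_zero_of_left (by omega) _
    · exact mul_eq_zero_of_right _ (ih h)

/-- At `n = 0` the truncated `n - 1` gives `a_{0,k}`, which is what makes
`offdiagCoeff_succ_succ` hold from `n = 0` on. -/
noncomputable def offdiagCoeff (n k : ℕ) : ℂ := 1 / 2 ^ k * triangleNum (n - 1) k

theorem offdiagCoeff_zero_right (n : ℕ) : offdiagCoeff n 0 = 1 := by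
  cases n <;> simp [offdiagCoeff, triangleNum]

theorem offdiagCoeff_eq_zero_of_lt {n k : ℕ} (h : n < 2 * k) : offdiagCoeff n k = 0 := by
  simp [offdiagCoeff, triangleNum_eq_zero_of_lt (show n - 1 + 1 < 2 * k by omega)]

theorem offdiagCoeff_succ_succ (n k : ℕ) :
    offdiagCoeff (n + 1) (k + 1) =
      offdiagCoeff n (k + 1) + ((n - 2 * k : ℕ) : ℂ) / 2 * offdiagCoeff n k := by
  rcases lt_or_ge n (2 * k) with h | h
  · rw [offdiagCoeff_eq_zero_of_lt (by omega), offdiagCoeff_eq_zero_of_lt (by omega),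
      offdiagCoeff_eq_zero_of_lt h]
    ring
  cases n with
  | zero =>
    obtain rfl : k = 0 := by omega
    simp [offdiagCoeff, triangleNum]
  | succ m =>
    simp only [offdiagCoeff, Nat.add_sub_cancel, triangleNum, Nat.cast_sub h]
    push_cast
    ring

theorem sum_offdiagCoeff_succ (n : ℕ) (M : ℕ → ℕ → ℂ) :
    ∑ k ∈ range (n + 1), offdiagCoeff n k *
        (2 * M (n - k + 1) (n - 2 * k + 1) + ((n - 2 * k : ℕ) : ℂ) * M (n - k) (n - 2 * k - 1)) =
      2 * ∑ k ∈ range (n + 2), offdiagCoeff (n + 1) k * M (n + 1 - k) (n + 1 - 2 * k) := by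
  set T : ℕ → ℂ := fun k => M (n + 1 - k) (n + 1 - 2 * k)
  have hfirst : ∀ k ∈ range (n + 1),
      offdiagCoeff n k * M (n - k + 1) (n - 2 * k + 1) = offdiagCoeff n k * T k := by
    intro k hk
    rcases lt_or_ge n (2 * k) with h | h
    · simp [offdiagCoeff_eq_zero_of_lt h]
    · simp only [T]
      congr 2 <;> omega
  have hsecond : ∀ k, M (n - k) (n - 2 * k - 1) = T (k + 1) := fun k => by
    simp only [T]; congr 1 <;> omega
  have hshift : ∑ k ∈ range (n + 1), offdiagCoeff n k * T k =
      ∑ k ∈ range (n + 1), offdiagCoeff n (k + 1) * T (k + 1) + T 0 := by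
    rw [sum_range_succ', sum_range_succ (fun k => offdiagCoeff n (k + 1) * T (k + 1)),
      offdiagCoeff_eq_zero_of_lt (show n < 2 * (n + 1) by omega), offdiagCoeff_zero_right,
      zero_mul, add_zero, one_mul]
  calc _ = 2 * ∑ k ∈ range (n + 1), offdiagCoeff n k * T k +
        ∑ k ∈ range (n + 1), ((n - 2 * k : ℕ) : ℂ) * offdiagCoeff n k * T (k + 1) := by
        rw [mul_sum, ← sum_add_distrib]
        refine sum_congr rfl fun k hk => ?_
        rw [← hfirst k hk, hsecond]
        ring
    _ = 2 * (∑ k ∈ range (n + 1),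
          (offdiagCoeff n (k + 1) + ((n - 2 * k : ℕ) : ℂ) / 2 * offdiagCoeff n k) * T (k + 1) +
          T 0) := by
        simp only [hshift, add_mul, sum_add_distrib, mul_add, mul_sum]
        ring_nf
    _ = _ := by
        rw [sum_range_succ' _ (n + 1), offdiagCoeff_zero_right, one_mul]
        simp only [offdiagCoeff_succ_succ, T]

section Analytic

variable (c : ℝ) (s : ℂ)

theorem hasDerivAt_ofReal_sub_sq_cpow (α : ℂ) {x : ℝ} (hx : 0 < c - x ^ 2) :
    HasDerivAt (fun y : ℝ => ((c - y ^ 2 : ℝ) : ℂ) ^ α)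
      (α * ((c - x ^ 2 : ℝ) : ℂ) ^ (α - 1) * (-2 * x)) x := by
  have hbase : HasDerivAt (fun y : ℝ => c - y ^ 2) (-2 * x) x := by
    simpa using ((hasDerivAt_pow 2 x).const_sub c)
  have h := (Complex.hasStrictDerivAt_cpow_const (c := α)
    (Complex.ofReal_mem_slitPlane.2 hx)).hasDerivAt.comp x hbase.ofReal_comp
  exact h.congr_deriv (by push_cast; ring)

noncomputable def detPowMonomial (p j : ℕ) (x : ℝ) : ℂ :=
  ((c - x ^ 2 : ℝ) : ℂ) ^ (-(s + (p : ℂ))) * (x : ℂ) ^ j * ∏ l ∈ range p, (s + l)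

theorem hasDerivAt_detPowMonomial (p j : ℕ) {x : ℝ} (hx : 0 < c - x ^ 2) :
    HasDerivAt (detPowMonomial c s p j)
      (2 * detPowMonomial c s (p + 1) (j + 1) x + j * detPowMonomial c s p (j - 1) x) x := by
  have h := ((hasDerivAt_ofReal_sub_sq_cpow c (-(s + p)) hx).mul
    (hasDerivAt_pow j (x : ℂ)).comp_ofReal).mul_const (∏ l ∈ range p, (s + l))
  refine h.congr_deriv ?_
  simp only [detPowMonomial]
  rw [prod_range_succ, pow_succ,
    show -(s + p) - 1 = -(s + ((p + 1 : ℕ) : ℂ)) by push_cast; ring]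
  ring

noncomputable def offdiagSum (n : ℕ) (x : ℝ) : ℂ :=
  ∑ k ∈ range (n + 1), offdiagCoeff n k * detPowMonomial c s (n - k) (n - 2 * k) x

theorem hasDerivAt_offdiagSum (n : ℕ) {x : ℝ} (hx : 0 < c - x ^ 2) :
    HasDerivAt (offdiagSum c s n) (2 * offdiagSum c s (n + 1) x) x := by
  have h := HasDerivAt.fun_sum fun k (_ : k ∈ range (n + 1)) =>
    (hasDerivAt_detPowMonomial c s (n - k) (n - 2 * k) hx).const_mul (offdiagCoeff n k)
  exact h.congr_deriv (sum_offdiagCoeff_succ n fun p j => detPowMonomial c s p j x)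

end Analytic

theorem offdiagSum_eq_sum_range_half (c : ℝ) (s : ℂ) (n : ℕ) (x : ℝ) :
    offdiagSum c s n x =
      ∑ k ∈ range (n / 2 + 1), offdiagCoeff n k * detPowMonomial c s (n - k) (n - 2 * k) x := by
  refine (sum_subset (range_subset_range.2 (by omega)) fun k _ hk => ?_).symm
  rw [offdiagCoeff_eq_zero_of_lt (by simp at hk; omega), zero_mul]

theorem iteratedDeriv_det_pow_offdiag (t11 t22 : ℝ)
    (s : ℂ) (n : ℕ) (x : ℝ) (hx : 0 < t11 * t22 - x ^ 2) :
    (1 / 2 ^ n : ℂ) *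
      iteratedDerivWithin n
        (fun x' : ℝ => ((t11 * t22 - x' ^ 2 : ℝ) : ℂ) ^ (-s))
        {x' : ℝ | 0 < t11 * t22 - x' ^ 2} x =
    ∑ k ∈ Finset.range (n / 2 + 1),
      (1 / 2 ^ k : ℂ) * (triangleNum (n - 1) k : ℂ) *
        ((t11 * t22 - x ^ 2 : ℝ) : ℂ) ^ (-(s + ((n - k : ℕ) : ℂ))) * (x : ℂ) ^ (n - 2 * k) *
        ∏ l ∈ Finset.range (n - k), (s + l) := by
  set c := t11 * t22
  have hU : IsOpen {x' : ℝ | 0 < c - x' ^ 2} := isOpen_lt continuous_const (by fun_prop)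
  have hderiv := iteratedDerivWithin_eq_of_hasDerivAt hU (fun n y => 2 ^ n * offdiagSum c s n y)
    (f := fun x' : ℝ => ((c - x' ^ 2 : ℝ) : ℂ) ^ (-s))
    (fun y _ => by simp [offdiagSum, offdiagCoeff_zero_right, detPowMonomial])
    (fun n y hy => ((hasDerivAt_offdiagSum c s n hy).const_mul _).congr_deriv (by ring)) n hx
  rw [hderiv, one_div, inv_mul_cancel_left₀ (by simp), offdiagSum_eq_sum_range_half]
  refine sum_congr rfl fun k _ => ?_
  simp only [offdiagCoeff, detPowMonomial]
  ring
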